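/- arXiv:1601.01911 — 2 statements merged into one kernel-verified Lean document; each statement's English description precedes it below -/
import Mathlib

section
/- For every r ∈ ℝ, (1/(2π)) ∫₀^{2π} cos(r sin t) dt = J₀(r). -/
/-! Expand `cos (r sin t)` in its Taylor series. The `k`-th term is bounded by `|r|^(2k)/(2k)!`,
the `k`-th term of the series of `cosh |r|`, so the series can be integrated termwise. By Wallis,
`∫₀^{2π} sin^(2k) = 2π (2k)! / (4^k (k!)^2)`, which turns the `k`-th term into `2π` times the
`k`-th term of `J0 r`. -/

open MeasureTheory intervalIntegral

/-- Bessel function of the first kind of order 0, defined by its power series. -/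
noncomputable def J0 (r : ℝ) : ℝ :=
  ∑' k : ℕ, (-1 : ℝ) ^ k / ((Nat.factorial k : ℝ)) ^ 2 * (r / 2) ^ (2 * k)

open Real Finset

lemma prod_range_odd_div_even (k : ℕ) :
    ∏ i ∈ range k, (2 * (i : ℝ) + 1) / (2 * i + 2)
      = ((2 * k).factorial : ℝ) / (4 ^ k * (k.factorial : ℝ) ^ 2) := by
  induction k with
  | zero => simp
  | succ n ih =>
    rw [prod_range_succ, ih, show 2 * (n + 1) = 2 * n + 1 + 1 by ring]
    push_cast [Nat.factorial_succ]
    field_simp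
    ring

lemma integral_sin_pow_even_zero_two_pi (k : ℕ) :
    ∫ t in (0 : ℝ)..2 * π, sin t ^ (2 * k)
      = 2 * π * (((2 * k).factorial : ℝ) / (4 ^ k * (k.factorial : ℝ) ^ 2)) := by
  have hper : Function.Periodic (fun t => sin t ^ (2 * k)) π := fun t => by
    simp only [sin_add_pi, Even.neg_pow ⟨k, two_mul k⟩]
  have hint : ∀ a b : ℝ, IntervalIntegrable (fun t => sin t ^ (2 * k)) volume a b :=
    fun a b => (continuous_sin.pow _).intervalIntegrable a b
  have := hper.intervalIntegral_add_zsmul_eq 2 0 hint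
  simp only [zero_add, zsmul_eq_mul, Int.cast_ofNat] at this
  rw [this, integral_sin_pow_even, prod_range_odd_div_even]
  ring

lemma hasSum_intervalIntegral_cos_mul_sin (r a b : ℝ) :
    HasSum (fun k : ℕ => ∫ t in a..b, (-1 : ℝ) ^ k * (r * sin t) ^ (2 * k) / (2 * k).factorial)
      (∫ t in a..b, cos (r * sin t)) := by
  refine hasSum_integral_of_dominated_convergence
    (fun k _ => |r| ^ (2 * k) / (2 * k).factorial) (fun k => ?_) (fun k => ?_)
    (ae_of_all _ fun _ _ => (hasSum_cosh |r|).summable) intervalIntegrable_const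
    (ae_of_all _ fun t _ => hasSum_cos (r * sin t))
  · exact (by fun_prop : Continuous _).aestronglyMeasurable
  · refine ae_of_all _ fun t _ => ?_
    have hsin : |r * sin t| ≤ |r| := by
      rw [abs_mul]
      exact mul_le_of_le_one_right (abs_nonneg r) (abs_sin_le_one t)
    rw [norm_div, norm_mul, norm_pow, norm_pow, norm_neg, norm_one, one_pow, one_mul,
      RCLike.norm_natCast, norm_eq_abs]
    gcongr

lemma integral_cos_series_term (r : ℝ) (k : ℕ) :
    ∫ t in (0 : ℝ)..2 * π, (-1 : ℝ) ^ k * (r * sin t) ^ (2 * k) / (2 * k).factorial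
      = 2 * π * ((-1 : ℝ) ^ k / (k.factorial : ℝ) ^ 2 * (r / 2) ^ (2 * k)) := by
  have hfun : (fun t => (-1 : ℝ) ^ k * (r * sin t) ^ (2 * k) / (2 * k).factorial)
      = fun t => (-1 : ℝ) ^ k * r ^ (2 * k) / (2 * k).factorial * sin t ^ (2 * k) := by
    ext t; ring
  have hfour : (2 : ℝ) ^ (2 * k) = 4 ^ k := by rw [pow_mul]; norm_num
  rw [hfun, intervalIntegral.integral_const_mul, integral_sin_pow_even_zero_two_pi, div_pow, hfour]
  field_simp

theorem integral_cos_sin_eq_J0 (r : ℝ) :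
    (1 / (2 * Real.pi)) * ∫ t in (0 : ℝ)..(2 * Real.pi), Real.cos (r * Real.sin t) = J0 r := by
  have h := (hasSum_intervalIntegral_cos_mul_sin r 0 (2 * π)).tsum_eq
  simp_rw [integral_cos_series_term, tsum_mul_left] at h
  rw [← J0] at h
  rw [← h]
  field_simp
end

section
/- Fix ω ∈ ℝ and x, z ∈ ℝ² with x ≠ z, write a = (x − z)/‖x − z‖ ∈ ℝ² and ρ = ω‖x − z‖, and define the complex-valued function P on [0, 2π] by P(t) = exp(i ω (x₁ cos t + x₂ sin t)) − [ J₀(ρ) + 2 i J₁(ρ) (a₁ cos t + a₂ sin t) ] · exp(i ω (z₁ cos t + z₂ sin t)). Then (1/(2π)) ∫₀^{2π} |P(t)|² dt = 1 − J₀(ρ)² − 2 J₁(ρ)². (This is the continuous, single-inhomogeneity form of the squared norm of the noise-space projection |P_noise(f(x))|² arising in the MUSIC imaging function: P equals the test function f(x) minus its orthogonal projection onto the span of the three signal-space functions associated with the inhomogeneity at z.) -/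
/-!
Factoring out the unimodular factor `exp (i ω z·θ)`, `|P(t)|²` becomes
`1 + J₀² + 4 J₁² s² - 2 J₀ cos (ρ s) - 4 J₁ s sin (ρ s)` with `s = a·θ(t)`. Writing `a = θ(φ)` gives
`s = cos (t - φ)`, and by periodicity the shift by `φ` can be dropped. What remains are `∫ cos² = π`
and the integral representations `∫₀^{2π} cos (ρ cos t) dt = 2π J₀(ρ)` and
`∫₀^{2π} cos t sin (ρ cos t) dt = 2π J₁(ρ)`, obtained by integrating the Taylor series of `cos` and
`sin` term by term against the Wallis integrals `∫₀^{2π} cos^{2k} = 2π (2k)! / (4^k k!²)`.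
-/

open MeasureTheory intervalIntegral

/-- Bessel function of the first kind of order 1, defined by its power series. -/
noncomputable def J1 (r : ℝ) : ℝ :=
  ∑' k : ℕ, (-1 : ℝ) ^ k / ((Nat.factorial k : ℝ) * (Nat.factorial (k + 1) : ℝ)) *
    (r / 2) ^ (2 * k + 1)

open Real Nat

theorem intervalIntegral.hasSum_integral_of_norm_le {E : Type*} [NormedAddCommGroup E]
    [NormedSpace ℝ E] {f : ℕ → ℝ → E} {F : ℝ → E} {u : ℕ → ℝ} {a b : ℝ}
    (hf : ∀ n, Continuous (f n)) (hu : Summable u) (hfu : ∀ n t, ‖f n t‖ ≤ u n)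
    (hF : ∀ t, HasSum (fun n => f n t) (F t)) :
    HasSum (fun n => ∫ t in a..b, f n t) (∫ t in a..b, F t) :=
  hasSum_integral_of_dominated_convergence (fun n _ => u n)
    (fun n => (hf n).aestronglyMeasurable) (fun n => ae_of_all _ fun t _ => hfu n t)
    (ae_of_all _ fun _ _ => hu) intervalIntegrable_const (ae_of_all _ fun t _ => hF t)

theorem integral_cos_pow_two_mul (k : ℕ) :
    ∫ t in (0 : ℝ)..2 * π, cos t ^ (2 * k) = 2 * π * (2 * k)! / (4 ^ k * (k ! : ℝ) ^ 2) := by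
  induction k with
  | zero => simp
  | succ k ih =>
    rw [show 2 * (k + 1) = 2 * k + 2 by ring, integral_cos_pow, ih,
      show 2 * k + 2 = 2 * k + 1 + 1 by ring]
    simp only [sin_two_pi, sin_zero, mul_zero, sub_zero, zero_div, zero_add, factorial_succ]
    push_cast
    field_simp
    ring

theorem abs_mul_pow_div_factorial_le {x : ℝ} (hx : |x| ≤ 1) (ρ : ℝ) (k n : ℕ) :
    |(-1) ^ k * (ρ * x) ^ n / n !| ≤ |ρ| ^ n / n ! := by
  rw [abs_div, abs_mul, abs_pow, abs_neg, abs_one, one_pow, one_mul, abs_pow, abs_mul,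
    Nat.abs_cast, mul_pow]
  gcongr
  exact mul_le_of_le_one_right (by positivity) (pow_le_one₀ (abs_nonneg x) hx)

theorem integral_cos_mul_cos_eq_J0 (ρ : ℝ) :
    ∫ t in (0 : ℝ)..2 * π, cos (ρ * cos t) = 2 * π * J0 ρ := by
  have hterm (k : ℕ) : ∫ t in (0 : ℝ)..2 * π, (-1) ^ k * (ρ * cos t) ^ (2 * k) / (2 * k)! =
      2 * π * ((-1) ^ k / (k ! : ℝ) ^ 2 * (ρ / 2) ^ (2 * k)) := by
    simp_rw [mul_pow ρ, mul_div_right_comm, ← mul_assoc]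
    rw [intervalIntegral.integral_const_mul, integral_cos_pow_two_mul, div_pow, pow_mul (2 : ℝ)]
    field_simp
    norm_num
  have hsum := hasSum_integral_of_norm_le (a := 0) (b := 2 * π)
    (fun k => by fun_prop) (hasSum_cosh |ρ|).summable
    (fun k t => (norm_eq_abs _).trans_le (abs_mul_pow_div_factorial_le (abs_cos_le_one t) ρ k _))
    (fun t => hasSum_cos (ρ * cos t))
  simp only [hterm] at hsum
  rw [J0, ← tsum_mul_left, hsum.tsum_eq]

theorem integral_cos_mul_sin_mul_cos_eq_J1 (ρ : ℝ) :
    ∫ t in (0 : ℝ)..2 * π, cos t * sin (ρ * cos t) = 2 * π * J1 ρ := by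
  have hterm (k : ℕ) :
      ∫ t in (0 : ℝ)..2 * π, cos t * ((-1) ^ k * (ρ * cos t) ^ (2 * k + 1) / (2 * k + 1)!) =
        2 * π * ((-1) ^ k / (k ! * (k + 1)! : ℝ) * (ρ / 2) ^ (2 * k + 1)) := by
    have hpow (t : ℝ) : cos t * ((-1) ^ k * (ρ * cos t) ^ (2 * k + 1) / (2 * k + 1)!) =
        (-1) ^ k * ρ ^ (2 * k + 1) / (2 * k + 1)! * cos t ^ (2 * (k + 1)) := by ring
    simp_rw [hpow]
    rw [intervalIntegral.integral_const_mul, integral_cos_pow_two_mul, div_pow,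
      show 2 * (k + 1) = 2 * k + 1 + 1 by ring, factorial_succ (2 * k + 1), factorial_succ k,
      pow_succ (2 : ℝ), pow_mul (2 : ℝ)]
    push_cast
    field_simp
    ring
  have hsum := hasSum_integral_of_norm_le (a := 0) (b := 2 * π)
    (fun k => by fun_prop) (hasSum_sinh |ρ|).summable
    (fun k t => by
      rw [norm_mul, norm_eq_abs, norm_eq_abs]
      exact (mul_le_of_le_one_left (abs_nonneg _) (abs_cos_le_one t)).trans
        (abs_mul_pow_div_factorial_le (abs_cos_le_one t) ρ k _))
    (fun t => (hasSum_sin (ρ * cos t)).mul_left (cos t))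
  simp only [hterm] at hsum
  rw [J1, ← tsum_mul_left, hsum.tsum_eq]

theorem exists_cos_eq_sin_eq {a b : ℝ} (h : a ^ 2 + b ^ 2 = 1) :
    ∃ θ : ℝ, cos θ = a ∧ sin θ = b := by
  have hnorm : ‖(a + b * Complex.I : ℂ)‖ = 1 := by
    rw [Complex.norm_add_mul_I, h, Real.sqrt_one]
  obtain ⟨θ, hθ⟩ := (Complex.norm_eq_one_iff _).1 hnorm
  refine ⟨θ, ?_, ?_⟩
  · simpa using congrArg Complex.re hθ
  · simpa using congrArg Complex.im hθ

theorem integral_comp_mul_cos_add_mul_sin {E : Type*} [NormedAddCommGroup E] [NormedSpace ℝ E]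
    (g : ℝ → E) {a b : ℝ} (h : a ^ 2 + b ^ 2 = 1) :
    ∫ t in (0 : ℝ)..2 * π, g (a * cos t + b * sin t) = ∫ t in (0 : ℝ)..2 * π, g (cos t) := by
  obtain ⟨θ, rfl, rfl⟩ := exists_cos_eq_sin_eq h
  have hrot (t : ℝ) : cos θ * cos t + sin θ * sin t = cos (t - θ) := by rw [cos_sub]; ring
  simp_rw [hrot]
  rw [integral_comp_sub_right (fun t => g (cos t)), zero_sub, ← neg_add_eq_sub]
  simpa using (cos_periodic.comp g).intervalIntegral_add_eq (-θ) 0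

theorem norm_exp_mul_I_sub_mul_exp_mul_I_sq (u v A B : ℝ) :
    ‖Complex.exp (Complex.I * u) - (A + Complex.I * B) * Complex.exp (Complex.I * v)‖ ^ 2 =
      1 + A ^ 2 + B ^ 2 - 2 * A * cos (u - v) - 2 * B * sin (u - v) := by
  have hfactor : Complex.exp (Complex.I * u) - (A + Complex.I * B) * Complex.exp (Complex.I * v) =
      Complex.exp (Complex.I * v) *
        (Complex.exp ((u - v : ℝ) * Complex.I) - (A + B * Complex.I)) := by
    rw [mul_sub, ← Complex.exp_add]
    push_cast
    ring_nf
  rw [hfactor, norm_mul, Complex.norm_exp_I_mul_ofReal, one_mul, Complex.sq_norm,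
    Complex.normSq_apply]
  simp only [Complex.sub_re, Complex.sub_im, Complex.add_re, Complex.add_im,
    Complex.exp_ofReal_mul_I_re, Complex.exp_ofReal_mul_I_im, Complex.ofReal_re,
    Complex.ofReal_im, Complex.mul_re, Complex.mul_im, Complex.I_re, Complex.I_im]
  nlinarith [sin_sq_add_cos_sq (u - v)]

theorem integral_bessel_profile (ρ A B : ℝ) :
    ∫ t in (0 : ℝ)..2 * π, (1 + A ^ 2 + (2 * B * cos t) ^ 2 - 2 * A * cos (ρ * cos t) -
        2 * (2 * B * cos t) * sin (ρ * cos t)) =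
      2 * π * (1 + A ^ 2 + 2 * B ^ 2 - 2 * A * J0 ρ - 4 * B * J1 ρ) := by
  have hsplit (t : ℝ) : 1 + A ^ 2 + (2 * B * cos t) ^ 2 - 2 * A * cos (ρ * cos t) -
      2 * (2 * B * cos t) * sin (ρ * cos t) = (1 + A ^ 2) + 4 * B ^ 2 * cos t ^ 2 -
        2 * A * cos (ρ * cos t) - 4 * B * (cos t * sin (ρ * cos t)) := by ring
  have hcos_sq : ∫ t in (0 : ℝ)..2 * π, cos t ^ 2 = π := by
    simp [integral_cos_sq]
  simp_rw [hsplit]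
  rw [intervalIntegral.integral_sub, intervalIntegral.integral_sub, intervalIntegral.integral_add,
    intervalIntegral.integral_const, intervalIntegral.integral_const_mul,
    intervalIntegral.integral_const_mul, intervalIntegral.integral_const_mul, hcos_sq,
    integral_cos_mul_cos_eq_J0, integral_cos_mul_sin_mul_cos_eq_J1]
  · simp only [sub_zero, smul_eq_mul]
    ring
  all_goals exact Continuous.intervalIntegrable (by fun_prop) _ _

theorem music_noise_projection_single (ω x1 x2 z1 z2 : ℝ) (h : (x1, x2) ≠ (z1, z2)) :
    let nrm : ℝ := Real.sqrt ((x1 - z1) ^ 2 + (x2 - z2) ^ 2)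
    let a1 : ℝ := (x1 - z1) / nrm
    let a2 : ℝ := (x2 - z2) / nrm
    let ρ : ℝ := ω * nrm
    let P : ℝ → ℂ := fun t =>
      Complex.exp (Complex.I * (ω : ℂ) * ((x1 * Real.cos t + x2 * Real.sin t : ℝ) : ℂ)) -
        (((J0 ρ : ℝ) : ℂ) +
            2 * Complex.I * ((J1 ρ : ℝ) : ℂ) * ((a1 * Real.cos t + a2 * Real.sin t : ℝ) : ℂ)) *
          Complex.exp (Complex.I * (ω : ℂ) * ((z1 * Real.cos t + z2 * Real.sin t : ℝ) : ℂ))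
    (1 / (2 * Real.pi)) * ∫ t in (0 : ℝ)..(2 * Real.pi), (‖P t‖) ^ 2
      = 1 - (J0 ρ) ^ 2 - 2 * (J1 ρ) ^ 2 := by
  intro nrm a1 a2 ρ P
  have hpos : 0 < (x1 - z1) ^ 2 + (x2 - z2) ^ 2 := by
    contrapose! h
    ext <;> nlinarith [sq_nonneg (x1 - z1), sq_nonneg (x2 - z2)]
  have hnrm : nrm ≠ 0 := (sqrt_pos.2 hpos).ne'
  have hunit : a1 ^ 2 + a2 ^ 2 = 1 := by
    simp only [a1, a2, div_pow, ← add_div, nrm, sq_sqrt hpos.le, div_self hpos.ne']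
  set G : ℝ → ℝ := fun s => 1 + J0 ρ ^ 2 + (2 * J1 ρ * s) ^ 2 -
      2 * J0 ρ * cos (ρ * s) - 2 * (2 * J1 ρ * s) * sin (ρ * s) with hG
  have hP (t : ℝ) : ‖P t‖ ^ 2 = G (a1 * cos t + a2 * sin t) := by
    have hphase : ω * (x1 * cos t + x2 * sin t) - ω * (z1 * cos t + z2 * sin t) =
        ρ * (a1 * cos t + a2 * sin t) := by
      simp only [ρ, a1, a2]
      field_simp
      ring
    simp only [hG]
    rw [← hphase, ← norm_exp_mul_I_sub_mul_exp_mul_I_sq]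
    simp only [P]
    push_cast
    ring_nf
  rw [integral_congr fun t _ => hP t, integral_comp_mul_cos_add_mul_sin G hunit, hG,
    integral_bessel_profile]
  field_simp
  ring
end
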